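/- arXiv:2101.05338 — 4 statements merged into one kernel-verified Lean document; each statement's English description precedes it below -/
import Mathlib

section
/- Let M be a k×k real symmetric negative definite matrix with M_{ij} ≥ 0 for i ≠ j (i.e., minus an M-matrix structure). If a ∈ ℝ^k satisfies (M a)_i ≥ 0 for all i, then a ≤ 0 componentwise. -/
/-!
Write `a = a⁺ - a⁻`. Then `a⁺ ⬝ M a⁺ = a⁺ ⬝ M a + a⁺ ⬝ M a⁻`. The first term is nonnegative since
`a⁺ ≥ 0` and `M a ≥ 0`; the second is a sum of terms `a⁺ᵢ Mᵢⱼ a⁻ⱼ`, which vanish for `i = j`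
because `a⁺` and `a⁻` have disjoint supports and are nonnegative for `i ≠ j`. So `a⁺ ⬝ M a⁺ ≥ 0`,
and negative definiteness forces `a⁺ = 0`.
-/

open Matrix

variable {ι R : Type*} [Fintype ι]

lemma Matrix.dotProduct_mulVec_nonneg_of_disjoint [CommSemiring R] [PartialOrder R]
    [IsOrderedRing R] {M : Matrix ι ι R} (hoff : ∀ i j, i ≠ j → 0 ≤ M i j) {u v : ι → R}
    (hu : 0 ≤ u) (hv : 0 ≤ v) (huv : ∀ i, u i * v i = 0) : 0 ≤ u ⬝ᵥ M *ᵥ v := by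
  simp only [dotProduct, mulVec, Finset.mul_sum]
  refine Finset.sum_nonneg fun i _ => Finset.sum_nonneg fun j _ => ?_
  obtain rfl | hij := eq_or_ne i j
  · rw [mul_left_comm, huv, mul_zero]
  · exact mul_nonneg (hu i) (mul_nonneg (hoff i j hij) (hv j))

lemma Matrix.posPart_dotProduct_mulVec_posPart_nonneg [CommRing R] [LinearOrder R]
    [IsStrictOrderedRing R] {M : Matrix ι ι R} (hoff : ∀ i j, i ≠ j → 0 ≤ M i j) {a : ι → R}
    (ha : 0 ≤ M *ᵥ a) : 0 ≤ a⁺ ⬝ᵥ M *ᵥ a⁺ := by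
  have hdisj : ∀ i, a⁺ i * a⁻ i = 0 := fun i => by
    rcases le_total (a i) 0 with h | h
    · rw [show a⁺ i = 0 from posPart_eq_zero.2 h, zero_mul]
    · rw [show a⁻ i = 0 from negPart_eq_zero.2 h, mul_zero]
  have hsplit : a⁺ = a + a⁻ := sub_eq_iff_eq_add.1 (posPart_sub_negPart a)
  have hmain : 0 ≤ a⁺ ⬝ᵥ M *ᵥ a :=
    Finset.sum_nonneg fun i _ => mul_nonneg (posPart_nonneg a i) (ha i)
  have hcross : 0 ≤ a⁺ ⬝ᵥ M *ᵥ a⁻ :=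
    dotProduct_mulVec_nonneg_of_disjoint hoff (posPart_nonneg a) (negPart_nonneg a) hdisj
  calc 0 ≤ a⁺ ⬝ᵥ M *ᵥ a + a⁺ ⬝ᵥ M *ᵥ a⁻ := add_nonneg hmain hcross
    _ = a⁺ ⬝ᵥ M *ᵥ a⁺ := by rw [← dotProduct_add, ← mulVec_add, ← hsplit]

theorem negativity_lemma_general
    (k : ℕ) (M : Matrix (Fin k) (Fin k) ℝ)
    (hneg : (-M).PosDef)
    (hoff : ∀ i j, i ≠ j → 0 ≤ M i j)
    (a : Fin k → ℝ) (h : ∀ i, 0 ≤ M.mulVec a i) :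
    ∀ i, a i ≤ 0 := by
  have hpos : a⁺ = 0 := by
    by_contra hne
    have hlt := hneg.dotProduct_mulVec_pos hne
    rw [star_trivial, neg_mulVec, dotProduct_neg, neg_pos] at hlt
    exact hlt.not_ge (posPart_dotProduct_mulVec_posPart_nonneg hoff h)
  exact posPart_eq_zero.1 hpos

/-- (Negativity lemma.) If `M` is symmetric negative definite with
nonnegative off-diagonal entries and `M a ≥ 0` componentwise, then `a ≤ 0`
componentwise. -/
theorem negativity_lemma
    (k : ℕ) (M : Matrix (Fin k) (Fin k) ℝ)
    (hsym : M.IsSymm) (hneg : (-M).PosDef)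
    (hoff : ∀ i j, i ≠ j → 0 ≤ M i j)
    (a : Fin k → ℝ) (h : ∀ i, 0 ≤ M.mulVec a i) :
    ∀ i, a i ≤ 0 :=
  negativity_lemma_general k M hneg hoff a h
end

section
/- With the notation of the relative Zariski decomposition: let M be k×k symmetric negative definite with M_{ij} ≥ 0 for i ≠ j, let b, b' ∈ ℝ^k with b' ≤ b componentwise, and let a, a' ≥ 0 be the corresponding solutions of the complementarity problem ((b - Ma)_i ≥ 0, = 0 when a_i > 0; similarly for b', a'). Then a ≤ a' componentwise. -/
/-!
Put `d = a - a'` and `v = d⁺`. Where `v i > 0` we have `a i > 0`, so complementarity gives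
`(M a) i = b i ≥ b' i ≥ (M a') i`, i.e. `(M d) i ≥ 0`. Since the off-diagonal entries of `M`
are nonnegative and `d⁻` vanishes at `i`, also `(M v) i = (M d) i + (M d⁻) i ≥ 0`.
Hence `v ⬝ᵥ M v ≥ 0`, which negative definiteness of `M` only allows for `v = 0`, i.e. `a ≤ a'`.
-/

namespace Matrix

variable {n R : Type*} [Fintype n]

section OffDiagNonneg

variable [Ring R] [LinearOrder R] [IsOrderedRing R] {M : Matrix n n R}

theorem mulVec_apply_nonneg_of_offDiag_nonneg (hM : ∀ i j, i ≠ j → 0 ≤ M i j) {w : n → R}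
    (hw : 0 ≤ w) {i : n} (hwi : w i = 0) : 0 ≤ (M *ᵥ w) i := by
  refine Finset.sum_nonneg fun j _ => ?_
  by_cases hji : j = i
  · simp [hji, hwi]
  · exact mul_nonneg (hM i j (Ne.symm hji)) (hw j)

theorem mulVec_posPart_apply_nonneg (hM : ∀ i j, i ≠ j → 0 ≤ M i j) {d : n → R} {i : n}
    (hdi : 0 ≤ d i) (hMd : 0 ≤ (M *ᵥ d) i) : 0 ≤ (M *ᵥ d⁺) i := by
  have hneg : 0 ≤ (M *ᵥ d⁻) i :=
    mulVec_apply_nonneg_of_offDiag_nonneg hM (negPart_nonneg d) (by simpa using hdi)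
  have hsplit : d⁺ = d + d⁻ := eq_add_of_sub_eq (posPart_sub_negPart d)
  rw [hsplit, mulVec_add, Pi.add_apply]
  exact add_nonneg hMd hneg

end OffDiagNonneg

theorem eq_zero_of_nonneg_of_mulVec_nonneg {M : Matrix n n ℝ} (hM : (-M).PosDef) {v : n → ℝ}
    (hv : 0 ≤ v) (hMv : ∀ i, 0 < v i → 0 ≤ (M *ᵥ v) i) : v = 0 := by
  by_contra hv0
  have hpos := hM.dotProduct_mulVec_pos hv0
  have hnonneg : 0 ≤ v ⬝ᵥ M *ᵥ v := Finset.sum_nonneg fun i _ => by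
    rcases (hv i).eq_or_lt with hvi | hvi
    · simp [← hvi]
    · exact mul_nonneg hvi.le (hMv i hvi)
  simp only [neg_mulVec, dotProduct_neg, star_trivial] at hpos
  linarith

end Matrix

theorem complementarity_monotone_general
    (k : ℕ) (M : Matrix (Fin k) (Fin k) ℝ)
    (hneg : (-M).PosDef)
    (hoff : ∀ i j, i ≠ j → 0 ≤ M i j)
    (b b' : Fin k → ℝ) (hbb : ∀ i, b' i ≤ b i)
    (a a' : Fin k → ℝ)
    (ha'0 : ∀ i, 0 ≤ a' i)
    (ha2 : ∀ i, 0 < a i → (b - M.mulVec a) i = 0)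
    (ha'1 : ∀ i, 0 ≤ (b' - M.mulVec a') i) :
    ∀ i, a i ≤ a' i := by
  have hv : (a - a')⁺ = 0 := by
    refine Matrix.eq_zero_of_nonneg_of_mulVec_nonneg hneg (posPart_nonneg _) fun j hj => ?_
    have hlt : a' j < a j := by simpa using hj
    refine Matrix.mulVec_posPart_apply_nonneg hoff (sub_nonneg.2 hlt.le) ?_
    have hMa := ha2 j ((ha'0 j).trans_lt hlt)
    have hMa' := ha'1 j
    have hb := hbb j
    simp only [Matrix.mulVec_sub, Pi.sub_apply] at hMa hMa' ⊢
    linarith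
  intro i
  simpa using congrFun hv i

/-- (Monotonicity of the negative part, Lemma 5.1 in linear-algebraic
form.) With `M` symmetric negative definite with nonnegative off-diagonal entries,
if `b' ≤ b` componentwise and `a, a' ≥ 0` solve the respective complementarity
problems, then `a ≤ a'` componentwise. -/
theorem complementarity_monotone
    (k : ℕ) (M : Matrix (Fin k) (Fin k) ℝ)
    (hsym : M.IsSymm) (hneg : (-M).PosDef)
    (hoff : ∀ i j, i ≠ j → 0 ≤ M i j)
    (b b' : Fin k → ℝ) (hbb : ∀ i, b' i ≤ b i)
    (a a' : Fin k → ℝ)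
    (ha0 : ∀ i, 0 ≤ a i) (ha'0 : ∀ i, 0 ≤ a' i)
    (ha1 : ∀ i, 0 ≤ (b - M.mulVec a) i)
    (ha2 : ∀ i, 0 < a i → (b - M.mulVec a) i = 0)
    (ha'1 : ∀ i, 0 ≤ (b' - M.mulVec a') i)
    (ha'2 : ∀ i, 0 < a' i → (b' - M.mulVec a') i = 0) :
    ∀ i, a i ≤ a' i :=
  complementarity_monotone_general k M hneg hoff b b' hbb a a' ha'0 ha2 ha'1
end

section
/- Let S be a smooth projective surface, D a big divisor on S with Zariski decomposition D = P_D + N_D, and π : S̃ → S the blowup of S at a point p with exceptional divisor E_p. Then Null(π*(P_D)) = {strict transforms of curves in Null(P_D)} ∪ {E_p}; consequently #Null(π*(D)) - #Null(D) = 1 = ρ(S̃) - ρ(S), and hence the relative Picard number ρ_D(S) := ρ(S) - #Null(P_D) satisfies ρ_{π*D}(S̃) = ρ_D(S). -/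
/-! By the projection formula the strict transform identifies `Null(P_D)` with the curves of
`Null(π*P_D)` other than `E_p`, and `E_p` itself lies in `Null(π*P_D)`. So the null locus gains
exactly one curve, as does the Picard number, and their difference is unchanged. -/

namespace Set

variable {α β : Type*}

theorem eq_image_preimage_union_singleton {f : α → β} {s : Set β} {e : β} (he : e ∈ s)
    (hrange : ∀ y, y ≠ e → y ∈ range f) : s = f '' (f ⁻¹' s) ∪ {e} := by
  rw [image_preimage_eq_inter_range]
  ext y
  by_cases hy : y = e
  · subst hy; simp [he]
  · simp [hy, hrange y hy]

theorem ncard_image_union_singleton {f : α → β} (hf : Function.Injective f) {e : β}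
    (he : e ∉ range f) {s : Set α} (hs : s.Finite) : (f '' s ∪ {e}).ncard = s.ncard + 1 := by
  have he' : e ∉ f '' s := fun h => he (image_subset_range f s h)
  rw [union_singleton, ncard_insert_of_notMem he' (hs.image f), ncard_image_of_injective s hf]

end Set

theorem relative_picard_number_blowup_invariant_general
    (CurS CurT : Type*) (ρS : ℕ)
    (dP : CurS → ℝ) (dP' : CurT → ℝ)
    (st : CurS → CurT) (Ep : CurT)
    (hst_inj : Function.Injective st)
    (hst_ne : ∀ C, st C ≠ Ep)
    (hst_surj : ∀ C' : CurT, C' ≠ Ep → ∃ C, st C = C')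
    (hproj : ∀ C, dP' (st C) = dP C)
    (hEp : dP' Ep = 0)
    (hfin : {C | dP C = 0}.Finite) :
    {C' | dP' C' = 0} = st '' {C | dP C = 0} ∪ {Ep} ∧
    {C' | dP' C' = 0}.ncard = {C | dP C = 0}.ncard + 1 ∧
    ((ρS + 1 : ℤ) - {C' | dP' C' = 0}.ncard = (ρS : ℤ) - {C | dP C = 0}.ncard) := by
  have hnull : {C | dP C = 0} = st ⁻¹' {C' | dP' C' = 0} := by
    ext C
    simp only [Set.mem_ofPred_eq, Set.mem_preimage, hproj]
  have hset : {C' | dP' C' = 0} = st '' {C | dP C = 0} ∪ {Ep} := by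
    rw [hnull]
    exact Set.eq_image_preimage_union_singleton hEp hst_surj
  have hEp_notMem : Ep ∉ Set.range st := by
    rintro ⟨C, hC⟩
    exact hst_ne C hC
  have hcard : {C' | dP' C' = 0}.ncard = {C | dP C = 0}.ncard + 1 := by
    rw [hset]
    exact Set.ncard_image_union_singleton hst_inj hEp_notMem hfin
  refine ⟨hset, hcard, ?_⟩
  rw [hcard]
  push_cast
  ring

/-- (Birational invariance of the relative Picard number,
Definition 2.5 / equation (2.1).) Model: `dP C = P_D · C` on `S`, `dP' C' = π*(P_D)·C'`
on the blowup `S̃`; the strict transform map `st` is a bijection onto the curves of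
`S̃` other than the exceptional divisor `Ep`; the projection formula gives
`dP' (st C) = dP C` and `dP' Ep = 0`. Then `Null(π*P_D)` is the image of `Null(P_D)`
together with `Ep`, its cardinality grows by exactly `1 = ρ(S̃) − ρ(S)`, and hence
`ρ_{π*D}(S̃) = ρ_D(S)`. -/
theorem relative_picard_number_blowup_invariant
    (CurS CurT : Type*) (ρS : ℕ)
    (dP : CurS → ℝ) (dP' : CurT → ℝ)
    (st : CurS → CurT) (Ep : CurT)
    (hst_inj : Function.Injective st)
    (hst_ne : ∀ C, st C ≠ Ep)
    (hst_surj : ∀ C' : CurT, C' ≠ Ep → ∃ C, st C = C')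
    (hproj : ∀ C, dP' (st C) = dP C)
    (hEp : dP' Ep = 0)
    (hnef : ∀ C, 0 ≤ dP C)
    (hfin : {C | dP C = 0}.Finite) :
    {C' | dP' C' = 0} = st '' {C | dP C = 0} ∪ {Ep} ∧
    {C' | dP' C' = 0}.ncard = {C | dP C = 0}.ncard + 1 ∧
    ((ρS + 1 : ℤ) - {C' | dP' C' = 0}.ncard = (ρS : ℤ) - {C | dP C = 0}.ncard) :=
  relative_picard_number_blowup_invariant_general CurS CurT ρS dP dP' st Ep hst_inj hst_ne hst_surj
    hproj hEp hfin
end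

section
/- Let S be a smooth projective surface and D a big and nef divisor with Null(D) = {E₁,…,E_ℓ}. Let C be an irreducible curve with C ∉ Null(D), Y• = {S ⊃ C ⊃ {p}} an admissible flag, D_t = D − tC with Zariski decomposition P_t + N_t for 0 < t < μ. If at t = t₀ ∈ (0, μ) the support of N_t acquires new irreducible components (i.e., supp(N_{t₀}) ⊊ supp(N_{t₀+ε}) for all small ε > 0), then at least one of the newly acquired components does not belong to Null(D). -/
/-!
Suppose every newly acquired component `E` of `N(t₀ + ε₀)` satisfies `D·E = 0`. Nefness of
`P(t₀)` gives `0 ≤ P(t₀)·E = −(t₀C + N(t₀))·E`. As `E` is neither `C` (since `D·C ≠ 0`) nor a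
component of `N(t₀)`, every component of the effective divisor `t₀C + N(t₀)` is orthogonal to `E`. Hence dropping the new
components from `N(t₀ + ε₀)` keeps `D − (t₀ + ε₀)C − N` nef: on a new component the pairing is
`0`, and on any other curve we only add back an effective divisor not containing it. This
contradicts the minimality of the negative part `N(t₀ + ε₀)`.
-/

/-- `n` is the negative part of the Zariski decomposition of the class `X`:
`n` is effective, supported on the curve classes `cl`, the difference
`X − Σ nⱼ·clⱼ` is nef, orthogonal to every curve in the support of `n`, and `n`
is minimal among effective divisors with nef difference. -/
def ZarNeg {V ι : Type*} [AddCommGroup V] [Module ℝ V]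
    (q : LinearMap.BilinForm ℝ V) (cl : ι → V) (X : V) (n : ι →₀ ℝ) : Prop :=
  (∀ i, 0 ≤ n i) ∧
  (∀ i, 0 ≤ q (X - n.sum fun j a => a • cl j) (cl i)) ∧
  (∀ i ∈ n.support, q (X - n.sum fun j a => a • cl j) (cl i) = 0) ∧
  (∀ g : ι →₀ ℝ, (∀ i, 0 ≤ g i) →
    (∀ i, 0 ≤ q (X - g.sum fun j a => a • cl j) (cl i)) → ∀ i, n i ≤ g i)

open Finsupp

theorem Finsupp.filter_nonneg {ι : Type*} {n : ι →₀ ℝ} (hn : ∀ j, 0 ≤ n j) (p : ι → Prop)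
    [DecidablePred p] (j : ι) : 0 ≤ n.filter p j := by
  rw [filter_apply]
  exact ite_nonneg (hn j) le_rfl

section CurvePairing

variable {V ι : Type*} [AddCommGroup V] [Module ℝ V]
  {q : LinearMap.BilinForm ℝ V} {cl : ι → V}

theorem bilin_linearCombination_left (f : ι →₀ ℝ) (v : V) :
    q (linearCombination ℝ cl f) v = ∑ j ∈ f.support, f j * q (cl j) v := by
  simp [linearCombination_apply, Finsupp.sum, map_sum]

theorem linearCombination_pairing_eq_zero {f : ι →₀ ℝ} {v : V}
    (h : ∀ j ∈ f.support, q (cl j) v = 0) : q (linearCombination ℝ cl f) v = 0 := by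
  rw [bilin_linearCombination_left]
  exact Finset.sum_eq_zero fun j hj => by rw [h j hj, mul_zero]

variable (hcross : ∀ i j : ι, i ≠ j → 0 ≤ q (cl i) (cl j))
include hcross

section OffSupport

variable {f : ι →₀ ℝ} (hf : ∀ j, 0 ≤ f j) {i : ι} (hi : f i = 0)
include hf hi

theorem pairing_term_nonneg (j : ι) : 0 ≤ f j * q (cl j) (cl i) := by
  rcases eq_or_ne j i with rfl | hji
  · simp [hi]
  · exact mul_nonneg (hf j) (hcross j i hji)

theorem linearCombination_pairing_nonneg : 0 ≤ q (linearCombination ℝ cl f) (cl i) := by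
  rw [bilin_linearCombination_left]
  exact Finset.sum_nonneg fun j _ => pairing_term_nonneg hcross hf hi j

theorem pairing_eq_zero_of_linearCombination_pairing_nonpos
    (h : q (linearCombination ℝ cl f) (cl i) ≤ 0) : ∀ j ∈ f.support, q (cl j) (cl i) = 0 := by
  rw [bilin_linearCombination_left] at h
  have hzero := (Finset.sum_eq_zero_iff_of_nonneg fun j _ => pairing_term_nonneg hcross hf hi j).1
    (h.antisymm (Finset.sum_nonneg fun j _ => pairing_term_nonneg hcross hf hi j))
  intro j hj
  exact (mul_eq_zero.1 (hzero j hj)).resolve_left (mem_support_iff.1 hj)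

end OffSupport

theorem pairing_nonneg_sub_linearCombination_filter {X : V} {n : ι →₀ ℝ} (hn : ∀ j, 0 ≤ n j)
    (hnef : ∀ i, 0 ≤ q (X - linearCombination ℝ cl n) (cl i)) {p : ι → Prop} [DecidablePred p]
    {i : ι} (hi : p i ∨ n i = 0) :
    0 ≤ q (X - linearCombination ℝ cl (n.filter p)) (cl i) := by
  have hsplit : X - linearCombination ℝ cl (n.filter p)
      = (X - linearCombination ℝ cl n) + linearCombination ℝ cl (n.filter fun j => ¬p j) := by
    have hsum := congrArg (linearCombination ℝ cl) (filter_add_filter_not n p)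
    rw [map_add] at hsum
    rw [← hsum]
    abel
  have hrest : 0 ≤ q (linearCombination ℝ cl (n.filter fun j => ¬p j)) (cl i) := by
    refine linearCombination_pairing_nonneg hcross (filter_nonneg hn _) ?_
    rw [filter_apply]
    split_ifs <;> tauto
  rw [hsplit, map_add, LinearMap.add_apply]
  exact add_nonneg (hnef i) hrest

theorem pairing_eq_zero_of_null_of_nef {D : V} {c₀ i : ι} {t : ℝ} {m : ι →₀ ℝ}
    (ht : 0 < t) (hm : ∀ j, 0 ≤ m j) (hic : i ≠ c₀) (him : m i = 0)
    (hnef : 0 ≤ q (D - t • cl c₀ - linearCombination ℝ cl m) (cl i)) (hDi : q D (cl i) = 0) :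
    q (cl c₀) (cl i) = 0 ∧ ∀ j ∈ m.support, q (cl j) (cl i) = 0 := by
  have hC := mul_nonneg ht.le (hcross c₀ i hic.symm)
  have hM := linearCombination_pairing_nonneg hcross hm him
  simp only [map_sub, map_smul, LinearMap.sub_apply, LinearMap.smul_apply, hDi,
    smul_eq_mul] at hnef
  have hCi : t * q (cl c₀) (cl i) = 0 := by linarith
  exact ⟨(mul_eq_zero.1 hCi).resolve_left ht.ne',
    pairing_eq_zero_of_linearCombination_pairing_nonpos hcross hm him (by linarith)⟩

end CurvePairing

theorem acquired_component_not_in_null_general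
    (V ι : Type*) [AddCommGroup V] [Module ℝ V]
    (q : LinearMap.BilinForm ℝ V)
    (cl : ι → V)
    (hcross : ∀ i j : ι, i ≠ j → 0 ≤ q (cl i) (cl j))
    (D : V)
    (c₀ : ι) (hc₀ : q D (cl c₀) ≠ 0)
    (μ : ℝ)
    (N : ℝ → ι →₀ ℝ)
    (hZar : ∀ t ∈ Set.Icc (0 : ℝ) μ, ZarNeg q cl (D - t • cl c₀) (N t))
    (t₀ : ℝ) (ht₀ : t₀ ∈ Set.Ioo 0 μ)
    (ε₀ : ℝ) (hε₀ : 0 < ε₀) (hε₀μ : t₀ + ε₀ < μ)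
    (hgrow : (N t₀).support ⊂ (N (t₀ + ε₀)).support) :
    ∃ i ∈ (N (t₀ + ε₀)).support, i ∉ (N t₀).support ∧ q D (cl i) ≠ 0 := by
  classical
  by_contra! hnull
  obtain ⟨hm0, hmnef, -, -⟩ := hZar t₀ ⟨ht₀.1.le, ht₀.2.le⟩
  obtain ⟨hn0, hnnef, -, hnmin⟩ := hZar (t₀ + ε₀) ⟨by linarith [ht₀.1], hε₀μ.le⟩
  simp only [← linearCombination_apply] at hmnef hnnef hnmin
  set m := N t₀
  set n := N (t₀ + ε₀)
  set g := n.filter (· ∈ m.support)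
  have hg_nef : ∀ i, 0 ≤ q (D - (t₀ + ε₀) • cl c₀ - linearCombination ℝ cl g) (cl i) := by
    intro i
    by_cases hnew : i ∈ n.support ∧ i ∉ m.support
    · have hDi := hnull i hnew.1 hnew.2
      obtain ⟨hCi, hmi⟩ := pairing_eq_zero_of_null_of_nef hcross ht₀.1 hm0
        (by rintro rfl; exact hc₀ hDi) (notMem_support_iff.1 hnew.2) (hmnef i) hDi
      have hgi : q (linearCombination ℝ cl g) (cl i) = 0 :=
        linearCombination_pairing_eq_zero fun j hj =>
          hmi j (by rw [support_filter, Finset.mem_filter] at hj; exact hj.2)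
      simp [hDi, hCi, hgi]
    · refine pairing_nonneg_sub_linearCombination_filter hcross hn0 hnnef ?_
      rw [not_and_or, not_not, notMem_support_iff] at hnew
      tauto
  obtain ⟨i₀, hi₀n, hi₀m⟩ := Finset.exists_of_ssubset hgrow
  have hle : n i₀ ≤ g i₀ := hnmin g (filter_nonneg hn0 _) hg_nef i₀
  rw [filter_apply, if_neg hi₀m] at hle
  exact mem_support_iff.1 hi₀n (hle.antisymm (hn0 i₀))

/-- (Lemma 3.1.) `D` big and nef, `C = cl c₀ ∉ Null(D)` the
divisorial part of an admissible flag, `N t` the negative part of the Zariski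
decomposition of `D − t·C`. If at `t₀ ∈ (0, μ)` the support of the negative part
acquires new components (it is stable equal to `supp N(t₀+ε₀)` for `0 < ε ≤ ε₀` and
strictly contains `supp N(t₀)`), then some newly acquired component `i` satisfies
`q D (cl i) ≠ 0`, i.e. does not belong to `Null(D)`. -/
theorem acquired_component_not_in_null
    (V ι : Type*) [AddCommGroup V] [Module ℝ V]
    (q : LinearMap.BilinForm ℝ V) (hsymm : ∀ x y, q x y = q y x)
    (cl : ι → V) (hclinj : Function.Injective cl)
    (hcross : ∀ i j : ι, i ≠ j → 0 ≤ q (cl i) (cl j))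
    (D : V) (hDnef : ∀ i, 0 ≤ q D (cl i)) (hDbig : 0 < q D D)
    (c₀ : ι) (hc₀ : q D (cl c₀) ≠ 0)
    (μ : ℝ) (hμ : 0 < μ)
    (N : ℝ → ι →₀ ℝ)
    (hZar : ∀ t ∈ Set.Icc (0 : ℝ) μ, ZarNeg q cl (D - t • cl c₀) (N t))
    (t₀ : ℝ) (ht₀ : t₀ ∈ Set.Ioo 0 μ)
    (ε₀ : ℝ) (hε₀ : 0 < ε₀) (hε₀μ : t₀ + ε₀ < μ)
    (hstable : ∀ ε ∈ Set.Ioc (0 : ℝ) ε₀, (N (t₀ + ε)).support = (N (t₀ + ε₀)).support)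
    (hgrow : (N t₀).support ⊂ (N (t₀ + ε₀)).support) :
    ∃ i ∈ (N (t₀ + ε₀)).support, i ∉ (N t₀).support ∧ q D (cl i) ≠ 0 :=
  acquired_component_not_in_null_general V ι q cl hcross D c₀ hc₀ μ N hZar t₀ ht₀ ε₀ hε₀ hε₀μ hgrow
end
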